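/- Rule-3 safeness: let G = (V, E, H) be a hypergraph with V = X ⊎ R as above, and let R' be a connected component of G[R] such that for every independent subset X₁ ⊆ X (i.e., containing no hyperedge of H) one has conf_{R'}(X₁) = α(R') - α(R' \ N_{R'}(X₁)) = 0. Then for every integer k, G has an independent set of size at least k if and only if the hypergraph obtained by deleting R' has an independent set of size at least k - α(R'). -/
import Mathlib


/-- An independent set of a simple graph. -/
def IsIndepSet' {V : Type*} (G : SimpleGraph V) (s : Finset V) : Prop :=
  ∀ a ∈ s, ∀ b ∈ s, ¬ G.Adj a b

/-- The independence number of a finite simple graph. -/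
noncomputable def alpha {V : Type*} [Fintype V] (G : SimpleGraph V) : ℕ :=
  sSup {n | ∃ s : Finset V, IsIndepSet' G s ∧ s.card = n}


/-- An independent set of the hypergraph whose ordinary edges are those of `G` and
whose hyperedges are the members of `H`. -/
def HyperIndep {V : Type*} (G : SimpleGraph V) (H : Finset (Finset V))
    (S : Finset V) : Prop :=
  (∀ u v, G.Adj u v → ¬(u ∈ S ∧ v ∈ S)) ∧ ∀ h ∈ H, ¬ h ⊆ S

/-- `N_{R'}(X₁)`: the vertices of `R'` adjacent in `G` to some vertex of `X₁`. -/
def nbhdIn {V : Type*} [DecidableEq V] (G : SimpleGraph V) [DecidableRel G.Adj]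
    (R' X₁ : Finset V) : Finset V :=
  R'.filter fun v => ∃ x ∈ X₁, G.Adj x v

lemma alpha_bddAbove {V : Type*} [Fintype V] (G : SimpleGraph V) :
    BddAbove {n | ∃ s : Finset V, IsIndepSet' G s ∧ s.card = n} := by
  refine ⟨Fintype.card V, fun n hn => ?_⟩
  obtain ⟨s, _, rfl⟩ := hn
  exact s.card_le_univ

lemma card_le_alpha {V : Type*} [Fintype V] {G : SimpleGraph V} {s : Finset V}
    (hs : IsIndepSet' G s) : s.card ≤ alpha G :=
  le_csSup (alpha_bddAbove G) ⟨s, hs, rfl⟩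

lemma alpha_exists {V : Type*} [Fintype V] (G : SimpleGraph V) :
    ∃ s : Finset V, IsIndepSet' G s ∧ s.card = alpha G :=
  Nat.sSup_mem (s := {n | ∃ s : Finset V, IsIndepSet' G s ∧ s.card = n})
    ⟨0, ∅, by simp [IsIndepSet'], rfl⟩ (alpha_bddAbove G)

/-- Rule-3 safeness: if `R'` is a connected component of `G[R]` (with `R = Xᶜ`) such
that every independent subset `X₁ ⊆ X` has `conf_{R'}(X₁) = 0`, then deleting `R'`
and decreasing `k` by `α(R')` yields an equivalent instance. -/
theorem rule3_safe {V : Type*} [Fintype V] [DecidableEq V] (G : SimpleGraph V)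
    [DecidableRel G.Adj] (X : Finset V) (H : Finset (Finset V))
    (hedges : ∀ u v, G.Adj u v → u ∉ X ∨ v ∉ X)
    (hH : ∀ h ∈ H, h ⊆ X)
    (R' : Finset V) (hR'sub : R' ⊆ Xᶜ)
    (hconn : (G.induce (R' : Set V)).Connected)
    (hclosed : ∀ u ∈ R', ∀ v ∈ (Xᶜ : Finset V), G.Adj u v → v ∈ R')
    (hrule : ∀ X₁ ⊆ X, (∀ h ∈ H, ¬ h ⊆ X₁) →
      alpha (G.induce (R' : Set V)) =
        alpha (G.induce ((R' \ nbhdIn G R' X₁ : Finset V) : Set V)))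
    (k : ℕ) :
    (∃ S : Finset V, HyperIndep G H S ∧ k ≤ S.card) ↔
    (∃ S : Finset V, S ∩ R' = ∅ ∧ HyperIndep G H S ∧
      k - alpha (G.induce (R' : Set V)) ≤ S.card) := by
  constructor
  · rintro ⟨S, ⟨hE, hHy⟩, hk⟩
    refine ⟨S \ R', by simp [Finset.sdiff_inter_self], ⟨?_, ?_⟩, ?_⟩
    · intro u v huv ⟨hu, hv⟩
      exact hE u v huv ⟨(Finset.mem_sdiff.mp hu).1, (Finset.mem_sdiff.mp hv).1⟩
    · intro h hh hsub
      exact hHy h hh (hsub.trans Finset.sdiff_subset)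
    · -- S ∩ R' is an independent set of the induced graph on R'
      have hcard : (S ∩ R').card ≤ alpha (G.induce (R' : Set V)) := by
        set s : Finset ↑(R' : Set V) :=
          Finset.univ.filter (fun v : ↑(R' : Set V) => (v : V) ∈ S) with hs
        have himg : s.image Subtype.val = S ∩ R' := by
          ext x
          simp only [hs, Finset.mem_image, Finset.mem_filter, Finset.mem_univ,
            true_and, Finset.mem_inter]
          constructor
          · rintro ⟨⟨y, hy⟩, hyS, rfl⟩
            exact ⟨hyS, by simpa using hy⟩
          · rintro ⟨hxS, hxR⟩
            exact ⟨⟨x, by simpa using hxR⟩, hxS, rfl⟩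
        have hindep : IsIndepSet' (G.induce (R' : Set V)) s := by
          intro a ha b hb hab
          simp only [hs, Finset.mem_filter] at ha hb
          exact hE a b hab ⟨ha.2, hb.2⟩
        calc (S ∩ R').card = s.card := by
              rw [← himg, Finset.card_image_of_injective _ Subtype.val_injective]
          _ ≤ _ := card_le_alpha hindep
      have := Finset.card_sdiff_add_card_inter S R'
      have hge : S.card - (S ∩ R').card ≤ (S \ R').card := by omega
      refine le_trans ?_ hge
      exact tsub_le_tsub hk hcard
  · rintro ⟨S, hSR, ⟨hE, hHy⟩, hk⟩
    set X₁ : Finset V := S ∩ X with hX₁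
    have hX₁sub : X₁ ⊆ X := Finset.inter_subset_right
    have hX₁ind : ∀ h ∈ H, ¬ h ⊆ X₁ := fun h hh hsub =>
      hHy h hh (hsub.trans Finset.inter_subset_left)
    have halpha := hrule X₁ hX₁sub hX₁ind
    obtain ⟨t, htind, htcard⟩ :=
      alpha_exists (G.induce ((R' \ nbhdIn G R' X₁ : Finset V) : Set V))
    set T : Finset V := t.image Subtype.val with hT
    have hTsub : T ⊆ R' \ nbhdIn G R' X₁ := by
      intro x hx
      simp only [hT, Finset.mem_image] at hx
      obtain ⟨⟨y, hy⟩, _, rfl⟩ := hx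
      simpa using hy
    have hTR' : T ⊆ R' := hTsub.trans Finset.sdiff_subset
    have hdisj : Disjoint S T := by
      rw [Finset.disjoint_left]
      intro x hxS hxT
      have : x ∈ S ∩ R' := Finset.mem_inter.mpr ⟨hxS, hTR' hxT⟩
      simp [hSR] at this
    have hTcard : T.card = alpha (G.induce (R' : Set V)) := by
      rw [hT, Finset.card_image_of_injective _ Subtype.val_injective, htcard, halpha]
    refine ⟨S ∪ T, ⟨?_, ?_⟩, ?_⟩
    · -- no edge inside S ∪ T
      have key : ∀ u ∈ S, ∀ v ∈ T, ¬ G.Adj u v := by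
        intro u hu v hv huv
        have hvR : v ∈ R' \ nbhdIn G R' X₁ := hTsub hv
        rw [Finset.mem_sdiff] at hvR
        by_cases huX : u ∈ X
        · exact hvR.2 (Finset.mem_filter.mpr ⟨hvR.1,
            ⟨u, Finset.mem_inter.mpr ⟨hu, huX⟩, huv⟩⟩)
        · have huR' : u ∈ R' :=
            hclosed v hvR.1 u (Finset.mem_compl.mpr huX) huv.symm
          have : u ∈ S ∩ R' := Finset.mem_inter.mpr ⟨hu, huR'⟩
          simp [hSR] at this
      intro u v huv ⟨hu, hv⟩
      rw [Finset.mem_union] at hu hv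
      rcases hu with hu | hu <;> rcases hv with hv | hv
      · exact hE u v huv ⟨hu, hv⟩
      · exact key u hu v hv huv
      · exact key v hv u hu huv.symm
      · -- both in T: independence of t
        simp only [hT, Finset.mem_image] at hu hv
        obtain ⟨a, ha, rfl⟩ := hu
        obtain ⟨b, hb, rfl⟩ := hv
        exact htind a ha b hb huv
    · intro h hh hsub
      refine hHy h hh fun x hx => ?_
      have hxX : x ∈ X := hH h hh hx
      rcases Finset.mem_union.mp (hsub hx) with hxS | hxT
      · exact hxS
      · exact absurd (hR'sub (hTR' hxT)) (by simpa using hxX)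
    · rw [Finset.card_union_of_disjoint hdisj, hTcard]
      omega
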